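/- arXiv:2210.12249 — 5 statements merged into one kernel-verified Lean document; each statement's English description precedes it below -/
import Mathlib

section
/- Let q be an odd prime power with q ≡ 1 (mod 4), and let η be the quadratic character of F_q. Then the number of x ∈ F_q satisfying η(x+1)(x+1) + η(x)x = 1 equals (q+3)/4, where η(x) is interpreted as an element of F_q via ℤ → F_q. -/
/-!
Since `2 ≠ 0` and `η(-1) = 1`, the equation `η(x+1)(x+1) + η(x)x = 1` holds exactly for `x = 0`
and for the `x` with `η(x) = -1`, `η(x+1) = 1`. These are counted by summing
`(1 - η(x))(1 + η(x+1))`, which is `4` on them and vanishes elsewhere except at `x = 0, -1`;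
the sum itself is `q + 1`, because `∑ η(x(x+1)) = -1` is, after `x ↦ -x`, the Jacobi sum `J(η, η)`
scaled by `η(-1)`.
-/

open Finset

section

variable {F : Type*} [Field F] [Fintype F] [DecidableEq F]

lemma sum_quadraticChar_add (hF : ringChar F ≠ 2) (c : F) :
    ∑ x : F, quadraticChar F (x + c) = 0 :=
  (Equiv.sum_comp (Equiv.addRight c) (quadraticChar F)).trans (quadraticChar_sum_zero hF)

lemma sum_quadraticChar_mul_add_one (hF : ringChar F ≠ 2) :
    ∑ x : F, quadraticChar F (x * (x + 1)) = -1 := by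
  have hJ := jacobiSum_nontrivial_inv (quadraticChar_ne_one hF)
  rw [(quadraticChar_isQuadratic F).inv, jacobiSum] at hJ
  have hsq : quadraticChar F (-1) * quadraticChar F (-1) = 1 := by
    rw [← map_mul, neg_one_mul, neg_neg, map_one]
  calc ∑ x : F, quadraticChar F (x * (x + 1))
      = ∑ y : F, quadraticChar F (-1) * (quadraticChar F y * quadraticChar F (1 - y)) :=
        (Equiv.sum_comp (Equiv.neg F) _).symm.trans <| sum_congr rfl fun y _ ↦ by
          simp only [Equiv.neg_apply, ← map_mul]; ring_nf
    _ = -1 := by rw [← mul_sum, hJ, mul_neg, hsq]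

lemma four_mul_card_nonsquare_succ_square (hF : ringChar F ≠ 2) :
    4 * (#{x : F | quadraticChar F x = -1 ∧ quadraticChar F (x + 1) = 1} : ℤ) + 2 =
      Fintype.card F + quadraticChar F (-1) := by
  set T : Finset F := {x | quadraticChar F x = -1 ∧ quadraticChar F (x + 1) = 1}
  let f : F → ℤ := fun x ↦ (1 - quadraticChar F x) * (1 + quadraticChar F (x + 1))
  have hsum : ∑ x, f x = Fintype.card F + 1 := by
    have expand (x : F) : f x = 1 + quadraticChar F (x + 1) - quadraticChar F x -
        quadraticChar F (x * (x + 1)) := by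
      simp only [f, map_mul]; ring
    simp only [expand, sum_add_distrib, sum_sub_distrib, quadraticChar_sum_zero hF,
      sum_quadraticChar_add hF, sum_quadraticChar_mul_add_one hF, sum_const, card_univ,
      nsmul_eq_mul]
    ring
  have hT : ∑ x ∈ T, f x = 4 * #T := by
    rw [sum_congr rfl fun x hx ↦ ?_, sum_const, nsmul_eq_mul, mul_comm]
    obtain ⟨h, h'⟩ := (mem_filter.mp hx).2
    simp only [f, h, h']
    norm_num
  have hTc : ∑ x ∈ univ.filter (· ∉ T), f x = 2 + (1 - quadraticChar F (-1)) := by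
    rw [sum_eq_add_of_mem 0 (-1) (by simp [T]) (by simp [T]) (by simp) ?_]
    · simp [f]
    intro x hx ⟨hx0, hx1⟩
    have hx1' : x + 1 ≠ 0 := fun h ↦ hx1 (eq_neg_of_add_eq_zero_left h)
    have hxT := (mem_filter.mp hx).2
    simp only [T, mem_filter, mem_univ, true_and, not_and] at hxT
    rcases quadraticChar_dichotomy hx0 with h | h
    · simp only [f, h, sub_self, zero_mul]
    rcases quadraticChar_dichotomy hx1' with h' | h'
    · exact absurd h' (hxT h)
    · simp only [f, h', add_neg_cancel, mul_zero]
  rw [← sum_filter_add_sum_filter_not univ (· ∈ T), filter_mem_eq_inter, univ_inter, hT,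
    hTc] at hsum
  linarith

lemma quadraticChar_weighted_sum_eq_one_iff (hF : ringChar F ≠ 2)
    (hneg : quadraticChar F (-1) = 1) (x : F) :
    ((quadraticChar F (x + 1) : ℤ) : F) * (x + 1) + ((quadraticChar F x : ℤ) : F) * x = 1 ↔
      x = 0 ∨ (quadraticChar F x = -1 ∧ quadraticChar F (x + 1) = 1) := by
  have h2 : (2 : F) ≠ 0 := Ring.two_ne_zero hF
  by_cases hx0 : x = 0
  · simp [hx0]
  by_cases hx1 : x + 1 = 0
  · obtain rfl : x = -1 := eq_neg_of_add_eq_zero_left hx1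
    simp [hneg, Ring.neg_one_ne_one_of_char_ne_two hF]
  rcases quadraticChar_dichotomy hx0 with h | h <;>
    rcases quadraticChar_dichotomy hx1 with h' | h' <;>
    simp only [h, h', hx0, false_or] <;> push_cast <;> norm_num
  · exact fun hP ↦ hx0 <| (mul_eq_zero.mp (by linear_combination hP : 2 * x = 0)).resolve_left h2
  · exact Ring.neg_one_ne_one_of_char_ne_two hF
  · exact fun hP ↦ hx1 <|
      (mul_eq_zero.mp (by linear_combination -hP : 2 * (x + 1) = 0)).resolve_left h2

end

theorem c_neg_one_b_one_count_q1mod4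
    {Fq : Type*} [Field Fq] [Fintype Fq] [DecidableEq Fq]
    (hq : ringChar Fq ≠ 2) (h4 : Fintype.card Fq % 4 = 1) :
    {x : Fq | ((quadraticChar Fq (x + 1) : ℤ) : Fq) * (x + 1) +
        ((quadraticChar Fq x : ℤ) : Fq) * x = 1}.ncard =
      (Fintype.card Fq + 3) / 4 := by
  have hm1 : quadraticChar Fq (-1) = 1 := by
    rw [quadraticChar_one_iff_isSquare (neg_ne_zero.mpr one_ne_zero),
      FiniteField.isSquare_neg_one_iff]
    omega
  set T : Finset Fq := {x | quadraticChar Fq x = -1 ∧ quadraticChar Fq (x + 1) = 1}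
  have hcount : 4 * (#T : ℤ) + 2 = Fintype.card Fq + 1 :=
    hm1 ▸ four_mul_card_nonsquare_succ_square hq
  have hset : {x : Fq | ((quadraticChar Fq (x + 1) : ℤ) : Fq) * (x + 1) +
      ((quadraticChar Fq x : ℤ) : Fq) * x = 1} = ↑(insert 0 T) := by
    ext x
    simp only [Set.mem_ofPred_eq, coe_insert, Set.mem_insert_iff, coe_filter, mem_univ,
      true_and, quadraticChar_weighted_sum_eq_one_iff hq hm1 x, T]
  have h0 : (0 : Fq) ∉ T := by simp [T]
  rw [hset, Set.ncard_coe_finset, card_insert_of_notMem h0]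
  omega
end

section
/- Let q be an odd prime power with q ≡ 3 (mod 4), let η be the quadratic character of F_q, and fix i, j ∈ {1, −1}. Let T_{i,j} = {b ∈ F_q : b ≠ ±1, η(b−1) = i, η(b+1) = j}. Then |T_{1,1}| = |T_{−1,−1}| = (q−3)/4, |T_{1,−1}| = (q−1+2η(2))/4, and |T_{−1,1}| = (q−1−2η(2))/4. -/
/-!
Write `χ` for the quadratic character. For `b ≠ ±1` and `s, t ∈ {±1}`, the product
`(1 + s χ(b - 1)) (1 + t χ(b + 1))` is `4` when `χ(b - 1) = s` and `χ(b + 1) = t`, and `0`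
otherwise. Summed over all of `𝔽_q`, the linear terms vanish and the mixed term is the
Jacobsthal sum `∑ χ(b - 1) χ(b + 1) = -1`; removing the two boundary terms `b = ±1` gives
`4 |T_{s,t}| = q - 2 - s χ(-2) - t χ(2) - s t`, and `χ(-2) = -χ(2)` when `q ≡ 3 (mod 4)`.
-/

open Finset

section QuadraticCharSums

variable {F : Type*} [Field F] [Fintype F] [DecidableEq F]

local notation "χ" => quadraticChar F

/-- At `x = 0` both sides vanish because `0⁻¹ = 0`. -/
lemma quadraticChar_mul_add_eq (a x : F) :
    χ x * χ (x + a) = χ (1 + a * x⁻¹) - if x = 0 then 1 else 0 := by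
  by_cases hx : x = 0
  · simp [hx]
  · have hsq : x * (x + a) = x ^ 2 * (1 + a * x⁻¹) := by field_simp
    rw [← map_mul, hsq, map_mul, quadraticChar_sq_one' hx, one_mul, if_neg hx, sub_zero]

lemma quadraticChar_sum_mul_add (hF : ringChar F ≠ 2) {a : F} (ha : a ≠ 0) :
    ∑ x, χ x * χ (x + a) = -1 := by
  let e : F ≃ F := (Equiv.inv F).trans ((Equiv.mulLeft₀ a ha).trans (Equiv.addLeft 1))
  have hsum : ∑ x, χ (1 + a * x⁻¹) = 0 := (e.sum_comp χ).trans (quadraticChar_sum_zero hF)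
  simp only [quadraticChar_mul_add_eq a, sum_sub_distrib, hsum, sum_ite_eq', mem_univ,
    if_true, zero_sub]

lemma quadraticChar_sum_sub_one_mul_add_one (hF : ringChar F ≠ 2) :
    ∑ b, χ (b - 1) * χ (b + 1) = -1 := by
  calc ∑ b, χ (b - 1) * χ (b + 1) = ∑ b, χ (b - 1) * χ (b - 1 + 2) :=
        sum_congr rfl fun b _ => by ring_nf
    _ = -1 := (Equiv.sum_comp (Equiv.subRight 1) fun x => χ x * χ (x + 2)).trans
        (quadraticChar_sum_mul_add hF (Ring.two_ne_zero hF))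

lemma sum_one_add_mul_quadraticChar_mul (hF : ringChar F ≠ 2) (s t : ℤ) :
    ∑ b, (1 + s * χ (b - 1)) * (1 + t * χ (b + 1)) = Fintype.card F - s * t := by
  have hsub : ∑ b, χ (b - 1) = 0 :=
    (Equiv.sum_comp (Equiv.subRight 1) χ).trans (quadraticChar_sum_zero hF)
  have hadd : ∑ b, χ (b + 1) = 0 :=
    (Equiv.sum_comp (Equiv.addRight 1) χ).trans (quadraticChar_sum_zero hF)
  have hexpand : ∀ b : F, (1 + s * χ (b - 1)) * (1 + t * χ (b + 1)) =
      1 + s * χ (b - 1) + t * χ (b + 1) + s * t * (χ (b - 1) * χ (b + 1)) := fun b => by ring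
  simp only [hexpand, sum_add_distrib, ← mul_sum, hsub, hadd,
    quadraticChar_sum_sub_one_mul_add_one hF, sum_const, card_univ, nsmul_eq_mul]
  ring

end QuadraticCharSums

lemma one_add_mul_mul_one_add_mul_eq_ite {s t u v : ℤ} (hs : s = 1 ∨ s = -1)
    (ht : t = 1 ∨ t = -1) (hu : u = 1 ∨ u = -1) (hv : v = 1 ∨ v = -1) :
    (1 + s * u) * (1 + t * v) = if u = s ∧ v = t then 4 else 0 := by
  rcases hs with rfl | rfl <;> rcases ht with rfl | rfl <;> rcases hu with rfl | rfl <;>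
    rcases hv with rfl | rfl <;> norm_num

lemma four_mul_ncard_quadraticChar_sub_one_add_one {F : Type*} [Field F] [Fintype F]
    [DecidableEq F] (hF : ringChar F ≠ 2) {s t : ℤ} (hs : s = 1 ∨ s = -1)
    (ht : t = 1 ∨ t = -1) :
    4 * ({b : F | b ≠ 1 ∧ b ≠ -1 ∧ quadraticChar F (b - 1) = s ∧
        quadraticChar F (b + 1) = t}.ncard : ℤ) =
      Fintype.card F - 2 - s * quadraticChar F (-2) - t * quadraticChar F 2 - s * t := by
  set χ := quadraticChar F
  set S : Finset F := univ \ {1, -1}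
  have hS (b : F) : b ∈ S ↔ b ≠ 1 ∧ b ≠ -1 := by simp [S]
  have hncard : {b : F | b ≠ 1 ∧ b ≠ -1 ∧ χ (b - 1) = s ∧ χ (b + 1) = t}.ncard =
      #{b ∈ S | χ (b - 1) = s ∧ χ (b + 1) = t} := by
    rw [Set.ncard_eq_toFinset_card']
    congr 1
    ext b
    simp [hS, and_assoc]
  have hindicator : ∀ b ∈ S, (if χ (b - 1) = s ∧ χ (b + 1) = t then (4 : ℤ) else 0) =
      (1 + s * χ (b - 1)) * (1 + t * χ (b + 1)) := by
    intro b hb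
    obtain ⟨hb1, hb2⟩ := (hS b).1 hb
    exact (one_add_mul_mul_one_add_mul_eq_ite hs ht
      (quadraticChar_dichotomy (sub_ne_zero.2 hb1))
      (quadraticChar_dichotomy (add_eq_zero_iff_eq_neg.not.2 hb2))).symm
  have hne : (1 : F) ≠ -1 := (Ring.neg_one_ne_one_of_char_ne_two hF).symm
  rw [hncard]
  calc 4 * (#{b ∈ S | χ (b - 1) = s ∧ χ (b + 1) = t} : ℤ)
      = ∑ b ∈ S, if χ (b - 1) = s ∧ χ (b + 1) = t then (4 : ℤ) else 0 := by
        rw [natCast_card_filter, mul_sum]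
        simp only [mul_ite, mul_one, mul_zero]
    _ = ∑ b ∈ S, (1 + s * χ (b - 1)) * (1 + t * χ (b + 1)) := sum_congr rfl hindicator
    _ = (Fintype.card F - s * t) - ((1 + t * χ 2) + (1 + s * χ (-2))) := by
        rw [sum_sdiff_eq_sub (subset_univ _), sum_one_add_mul_quadraticChar_mul hF,
          sum_pair hne]
        norm_num [χ]
    _ = Fintype.card F - 2 - s * χ (-2) - t * χ 2 - s * t := by ring

theorem T_ij_card_q3mod4
    {Fq : Type*} [Field Fq] [Fintype Fq] [DecidableEq Fq]
    (hq : ringChar Fq ≠ 2) (h4 : Fintype.card Fq % 4 = 3) :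
    (({b : Fq | b ≠ 1 ∧ b ≠ -1 ∧ quadraticChar Fq (b - 1) = 1 ∧
        quadraticChar Fq (b + 1) = 1}.ncard : ℤ) = ((Fintype.card Fq : ℤ) - 3) / 4) ∧
    (({b : Fq | b ≠ 1 ∧ b ≠ -1 ∧ quadraticChar Fq (b - 1) = -1 ∧
        quadraticChar Fq (b + 1) = -1}.ncard : ℤ) = ((Fintype.card Fq : ℤ) - 3) / 4) ∧
    (({b : Fq | b ≠ 1 ∧ b ≠ -1 ∧ quadraticChar Fq (b - 1) = 1 ∧
        quadraticChar Fq (b + 1) = -1}.ncard : ℤ) =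
      ((Fintype.card Fq : ℤ) - 1 + 2 * quadraticChar Fq 2) / 4) ∧
    (({b : Fq | b ≠ 1 ∧ b ≠ -1 ∧ quadraticChar Fq (b - 1) = -1 ∧
        quadraticChar Fq (b + 1) = 1}.ncard : ℤ) =
      ((Fintype.card Fq : ℤ) - 1 - 2 * quadraticChar Fq 2) / 4) := by
  have hneg_one : quadraticChar Fq (-1) = -1 :=
    quadraticChar_neg_one_iff_not_isSquare.2 <|
      FiniteField.isSquare_neg_one_iff.not.2 (not_not.2 h4)
  have hneg_two : quadraticChar Fq (-2) = -quadraticChar Fq 2 := by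
    rw [show (-2 : Fq) = -1 * 2 by ring, map_mul, hneg_one, neg_one_mul]
  have hcount := @four_mul_ncard_quadraticChar_sub_one_add_one Fq _ _ _ hq
  have h₁₁ := hcount (.inl rfl) (.inl rfl)
  have h₂₂ := hcount (.inr rfl) (.inr rfl)
  have h₁₂ := hcount (.inl rfl) (.inr rfl)
  have h₂₁ := hcount (.inr rfl) (.inl rfl)
  rw [hneg_two] at h₁₁ h₂₂ h₁₂ h₂₁
  omega
end

section
/- Let q be an odd prime power with q ≡ 1 (mod 4), and let η be the quadratic character of F_q. For each b ∈ F_q, let N(b) be the number of x ∈ F_q satisfying η(x+1)(x+1) + η(x)x = b (with η-values mapped into F_q). Then the number of b with N(b) = 0 is (q−1)/2, the number of b with N(b) = 1 is (q−3)/2, and N(1) = N(−1) = (q+3)/4. In particular max_b N(b) = (q+3)/4. -/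
/-!
Write `g x = η(x+1)(x+1) + η(x)x`. Unless `g x = ±1`, the signs agree, `η x = η (x+1) = ±1`,
and then `g x = η(x)(2x+1)`, so `g x ^ 2 - 1 = 4x(x+1)` is a nonzero square. Since `η(-1) = 1`,
we have `g (-1-x) = -g x`, and this symmetry makes `g` a bijection from `{x | g x ≠ ±1}` onto
`{b | η(b² - 1) = 1}`. Hence each `b ≠ ±1` has one or no preimage according to `η(b² - 1)`,
the fibres over `1` and `-1` have equal size, and counting all of `F_q` determines that size
once the Jacobi sum `∑_b η(b² - 1) = -1` has counted the `b` with `η(b² - 1) = ±1`.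
-/

open Finset

section
variable {F : Type*} [Field F] [Fintype F] [DecidableEq F]

local notation "η" => quadraticChar F

theorem sum_quadraticChar_sq_sub_one (hF : ringChar F ≠ 2) :
    ∑ b : F, η (b ^ 2 - 1) = -1 := by
  have h2 : (2 : F) ≠ 0 := Ring.two_ne_zero hF
  have hJ := jacobiSum_nontrivial_inv (quadraticChar_ne_one hF)
  rw [(quadraticChar_isQuadratic F).inv, jacobiSum] at hJ
  -- substitute `b = 1 - 2x`, so that `b ^ 2 - 1 = -4x(1 - x)` and the sum is `η(-1) J(η, η)`
  have hsub : ∀ x : F, η (-1) * (η x * η (1 - x)) = η ((1 - 2 * x) ^ 2 - 1) := fun x => by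
    rw [show (1 - 2 * x) ^ 2 - 1 = 2 ^ 2 * (-1 * (x * (1 - x))) by ring, map_mul,
      quadraticChar_sq_one' h2, one_mul, map_mul, map_mul]
  rw [← Fintype.sum_equiv ((Equiv.mulLeft₀ 2 h2).trans (Equiv.subLeft 1)) _ _ hsub, ← mul_sum,
    hJ]
  linear_combination -quadraticChar_sq_one (F := F) (neg_ne_zero.mpr one_ne_zero)

theorem two_mul_ncard_quadraticChar_sq_sub_one_eq (hF : ringChar F ≠ 2) {ε : ℤ}
    (hε : ε = 1 ∨ ε = -1) :
    2 * ({b : F | η (b ^ 2 - 1) = ε}.ncard : ℤ) = Fintype.card F - 2 - ε := by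
  have hpoint : ∀ b : F, (if η (b ^ 2 - 1) = ε then 2 else 0 : ℤ)
      = ε * η (b ^ 2 - 1) + 1 - if b ^ 2 = 1 then 1 else 0 := fun b => by
    by_cases hb : b ^ 2 = 1
    · rcases hε with rfl | rfl <;> simp [hb]
    · rcases quadraticChar_dichotomy (sub_ne_zero.mpr hb) with h | h <;>
        rcases hε with rfl | rfl <;> simp [h, hb]
  have hroots : (#{b : F | b ^ 2 = 1} : ℤ) = 2 := by
    have := quadraticChar_card_sqrts hF 1
    rw [Set.toFinset_ofPred, map_one] at this
    rw [this]; norm_num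
  rw [Set.ncard_eq_toFinset_card', Set.toFinset_ofPred, natCast_card_filter, mul_sum]
  simp only [mul_ite, mul_one, mul_zero]
  rw [sum_congr rfl fun b _ => hpoint b, sum_sub_distrib, sum_add_distrib, ← mul_sum,
    sum_quadraticChar_sq_sub_one hF, ← natCast_card_filter, hroots, sum_const, card_univ,
    nsmul_eq_mul]
  ring

/-- `η(x) x`, which is `x ^ ((q + 1) / 2)` by Euler's criterion. -/
def quadTwist (x : F) : F := (η x : F) * x

def quadTwistSum (x : F) : F := quadTwist (x + 1) + quadTwist x

theorem quadTwist_neg (h : η (-1) = 1) (x : F) : quadTwist (-x) = -quadTwist x := by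
  rw [quadTwist, quadTwist, neg_eq_neg_one_mul x, map_mul, h, one_mul]
  ring

theorem quadTwistSum_neg_sub_one (h : η (-1) = 1) (x : F) :
    quadTwistSum (-1 - x) = -quadTwistSum x := by
  rw [quadTwistSum, quadTwistSum, show -1 - x + 1 = -x by ring, show -1 - x = -(x + 1) by ring,
    quadTwist_neg h, quadTwist_neg h]
  ring

theorem quadTwistSum_of_quadraticChar_succ_eq {x : F} (hx : η (x + 1) = η x) :
    quadTwistSum x = η x * (2 * x + 1) := by
  rw [quadTwistSum, quadTwist, quadTwist, hx]
  ring

theorem quadTwistSum_eq_one_or_eq_neg_one_or (h : η (-1) = 1) (x : F) :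
    quadTwistSum x = 1 ∨ quadTwistSum x = -1 ∨ (x ≠ 0 ∧ η (x + 1) = η x) := by
  rcases eq_or_ne x 0 with rfl | hx0
  · simp [quadTwistSum, quadTwist]
  rcases eq_or_ne x (-1) with rfl | hx1
  · simp [quadTwistSum, quadTwist, h]
  have hx1' : x + 1 ≠ 0 := fun h' => hx1 (eq_neg_of_add_eq_zero_left h')
  rcases quadraticChar_dichotomy hx0 with h0 | h0 <;>
    rcases quadraticChar_dichotomy hx1' with h1 | h1
  · exact .inr (.inr ⟨hx0, h1.trans h0.symm⟩)
  · right; left; simp [quadTwistSum, quadTwist, h0, h1]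
  · left; simp [quadTwistSum, quadTwist, h0, h1]
  · exact .inr (.inr ⟨hx0, h1.trans h0.symm⟩)

theorem quadraticChar_succ_eq_of_quadTwistSum_ne (h : η (-1) = 1) {x : F}
    (hx1 : quadTwistSum x ≠ 1) (hx2 : quadTwistSum x ≠ -1) : x ≠ 0 ∧ η (x + 1) = η x :=
  ((quadTwistSum_eq_one_or_eq_neg_one_or h x).resolve_left hx1).resolve_left hx2

theorem mapsTo_quadTwistSum (hF : ringChar F ≠ 2) (h : η (-1) = 1) :
    Set.MapsTo quadTwistSum {x : F | quadTwistSum x ≠ 1 ∧ quadTwistSum x ≠ -1}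
      {b | η (b ^ 2 - 1) = 1} := by
  rintro x ⟨hx1, hx2⟩
  change η (quadTwistSum x ^ 2 - 1) = 1
  obtain ⟨hx0, hxs⟩ := quadraticChar_succ_eq_of_quadTwistSum_ne h hx1 hx2
  have hsq : ((η x : ℤ) : F) ^ 2 = 1 := by
    rw [← Int.cast_pow, quadraticChar_sq_one hx0, Int.cast_one]
  rw [quadTwistSum_of_quadraticChar_succ_eq hxs,
    show (η x * (2 * x + 1)) ^ 2 - 1 = 2 ^ 2 * (x * (x + 1)) by
      linear_combination (2 * x + 1) ^ 2 * hsq,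
    map_mul, quadraticChar_sq_one' (Ring.two_ne_zero hF), map_mul, hxs, one_mul,
    ← sq, quadraticChar_sq_one hx0]

theorem injOn_quadTwistSum (hF : ringChar F ≠ 2) (h : η (-1) = 1) :
    Set.InjOn quadTwistSum {x : F | quadTwistSum x ≠ 1 ∧ quadTwistSum x ≠ -1} := by
  have h2 : (2 : F) ≠ 0 := Ring.two_ne_zero hF
  rintro x ⟨hx1, hx2⟩ y ⟨hy1, hy2⟩ hxy
  obtain ⟨hx0, hxs⟩ := quadraticChar_succ_eq_of_quadTwistSum_ne h hx1 hx2
  obtain ⟨hy0, hys⟩ := quadraticChar_succ_eq_of_quadTwistSum_ne h hy1 hy2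
  rw [quadTwistSum_of_quadraticChar_succ_eq hxs, quadTwistSum_of_quadraticChar_succ_eq hys] at hxy
  -- if the signs `η x`, `η y` differ then `y = -1 - x`, whose sign is `η (x + 1) = η x`
  have hneg : y = -1 - x → η y = η x := fun hyx => by
    rw [hyx, show -1 - x = -1 * (x + 1) by ring, map_mul, h, one_mul, hxs]
  rcases quadraticChar_dichotomy hx0 with hx | hx <;>
    rcases quadraticChar_dichotomy hy0 with hy | hy <;>
    simp only [hx, hy, Int.cast_one, Int.cast_neg, one_mul, neg_one_mul] at hxy
  · exact mul_left_cancel₀ h2 (by linear_combination hxy)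
  · have := hneg (mul_left_cancel₀ h2 (by linear_combination hxy))
    rw [hx, hy] at this; norm_num at this
  · have := hneg (mul_left_cancel₀ h2 (by linear_combination -hxy))
    rw [hx, hy] at this; norm_num at this
  · exact mul_left_cancel₀ h2 (by linear_combination -hxy)

theorem surjOn_quadTwistSum (hF : ringChar F ≠ 2) (h : η (-1) = 1) :
    Set.SurjOn quadTwistSum {x : F | quadTwistSum x ≠ 1 ∧ quadTwistSum x ≠ -1}
      {b | η (b ^ 2 - 1) = 1} := by
  have h2 : (2 : F) ≠ 0 := Ring.two_ne_zero hF
  intro b (hb : η (b ^ 2 - 1) = 1)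
  have hb1 : b ≠ 1 := by rintro rfl; simp at hb
  have hb2 : b ≠ -1 := by rintro rfl; simp at hb
  suffices ∃ x, quadTwistSum x = b by
    obtain ⟨x, rfl⟩ := this
    exact ⟨x, ⟨hb1, hb2⟩, rfl⟩
  set u := (b - 1) / 2 with hu_def
  have hbu : 2 * u + 1 = b := by rw [hu_def]; field_simp; ring
  have hu : η u * η (u + 1) = 1 := by
    rw [← map_mul,
      show u * (u + 1) = (2⁻¹) ^ 2 * (b ^ 2 - 1) by rw [← hbu]; field_simp; ring, map_mul,
      quadraticChar_sq_one' (inv_ne_zero h2), hb, one_mul]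
  -- `g u = η(u) b`; when `η u = -1` the reflection `-1 - u` flips the sign
  rcases Int.eq_one_or_neg_one_of_mul_eq_one' hu with ⟨hu0, hu1⟩ | ⟨hu0, hu1⟩
  · refine ⟨u, ?_⟩
    rw [quadTwistSum_of_quadraticChar_succ_eq (hu1.trans hu0.symm), hu0, hbu]
    simp
  · refine ⟨-1 - u, ?_⟩
    rw [quadTwistSum_neg_sub_one h, quadTwistSum_of_quadraticChar_succ_eq (hu1.trans hu0.symm),
      hu0, hbu]
    simp

theorem bijOn_quadTwistSum (hF : ringChar F ≠ 2) (h : η (-1) = 1) :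
    Set.BijOn quadTwistSum {x : F | quadTwistSum x ≠ 1 ∧ quadTwistSum x ≠ -1}
      {b | η (b ^ 2 - 1) = 1} :=
  ⟨mapsTo_quadTwistSum hF h, injOn_quadTwistSum hF h, surjOn_quadTwistSum hF h⟩

theorem ncard_quadTwistSum_eq (hF : ringChar F ≠ 2) (h : η (-1) = 1) {b : F}
    (hb : b ^ 2 ≠ 1) :
    {x | quadTwistSum x = b}.ncard = if η (b ^ 2 - 1) = 1 then 1 else 0 := by
  have hbij := bijOn_quadTwistSum hF h
  have hfiber : ∀ x, quadTwistSum x = b → quadTwistSum x ≠ 1 ∧ quadTwistSum x ≠ -1 := by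
    rintro x rfl
    exact ⟨fun h' => hb (by simp [h']), fun h' => hb (by simp [h'])⟩
  split_ifs with hη
  · obtain ⟨x, hx, rfl⟩ := hbij.surjOn hη
    exact Set.ncard_eq_one.mpr
      ⟨x, Set.ext fun y => ⟨fun hy => hbij.injOn (hfiber y hy) hx hy, fun hy => hy ▸ rfl⟩⟩
  · exact (Set.ncard_eq_zero).mpr
      (Set.eq_empty_of_forall_notMem fun x hx => hη (hx ▸ hbij.mapsTo (hfiber x hx)))

theorem ncard_quadTwistSum_eq_neg (h : η (-1) = 1) (b : F) :
    {x | quadTwistSum x = -b}.ncard = {x | quadTwistSum x = b}.ncard := by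
  have hpre : {x | quadTwistSum x = -b} = (fun x => -1 - x) ⁻¹' {x | quadTwistSum x = b} := by
    ext x
    simp [quadTwistSum_neg_sub_one h, neg_eq_iff_eq_neg]
  rw [hpre, Set.ncard_preimage_of_injective_subset_range sub_right_injective
    fun y _ => ⟨-1 - y, sub_sub_cancel _ _⟩]

theorem two_mul_ncard_quadTwistSum_eq_one_add_ncard_eq_card (hF : ringChar F ≠ 2)
    (h : η (-1) = 1) :
    2 * {x : F | quadTwistSum x = 1}.ncard + {b : F | η (b ^ 2 - 1) = 1}.ncard
      = Fintype.card F := by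
  have hsplit := Set.ncard_add_ncard_compl {x : F | quadTwistSum x = 1}
  have hsplit' := Set.ncard_inter_add_ncard_sdiff_eq_ncard
    {x : F | quadTwistSum x = 1}ᶜ {x | quadTwistSum x = -1}
  have hinter : {x : F | quadTwistSum x = 1}ᶜ ∩ {x | quadTwistSum x = -1}
      = {x | quadTwistSum x = -1} :=
    Set.inter_eq_right.mpr fun x (hx : quadTwistSum x = -1) (h' : quadTwistSum x = 1) =>
      Ring.neg_one_ne_one_of_char_ne_two hF (hx.symm.trans h')
  rw [hinter,
    show {x : F | quadTwistSum x = 1}ᶜ \ {x | quadTwistSum x = -1}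
      = {x | quadTwistSum x ≠ 1 ∧ quadTwistSum x ≠ -1} from rfl,
    (bijOn_quadTwistSum hF h).ncard_eq, ncard_quadTwistSum_eq_neg h 1] at hsplit'
  rw [Nat.card_eq_fintype_card] at hsplit
  omega

theorem quadraticChar_neg_one_eq_one_of_card_mod_four (h4 : Fintype.card F % 4 = 1) :
    η (-1) = 1 :=
  (quadraticChar_one_iff_isSquare (neg_ne_zero.mpr one_ne_zero)).mpr
    (FiniteField.isSquare_neg_one_iff.mpr (by omega))

theorem ncard_quadTwistSum_eq_of_sq_eq_one (hF : ringChar F ≠ 2) (h4 : Fintype.card F % 4 = 1)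
    {b : F} (hb : b ^ 2 = 1) :
    {x | quadTwistSum x = b}.ncard = (Fintype.card F + 3) / 4 := by
  have h := quadraticChar_neg_one_eq_one_of_card_mod_four h4
  have hpair := two_mul_ncard_quadTwistSum_eq_one_add_ncard_eq_card hF h
  have hcount := two_mul_ncard_quadraticChar_sq_sub_one_eq hF (F := F) (Or.inl rfl)
  rcases sq_eq_one_iff.mp hb with rfl | rfl
  · omega
  · rw [ncard_quadTwistSum_eq_neg h 1]
    omega

theorem ncard_quadTwistSum_eq_ite (hF : ringChar F ≠ 2) (h4 : Fintype.card F % 4 = 1) (b : F) :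
    {x | quadTwistSum x = b}.ncard =
      if b ^ 2 = 1 then (Fintype.card F + 3) / 4 else if η (b ^ 2 - 1) = 1 then 1 else 0 := by
  by_cases hb : b ^ 2 = 1
  · rw [if_pos hb, ncard_quadTwistSum_eq_of_sq_eq_one hF h4 hb]
  · rw [if_neg hb, ncard_quadTwistSum_eq hF (quadraticChar_neg_one_eq_one_of_card_mod_four h4) hb]

theorem setOf_ncard_quadTwistSum_eq_zero (hF : ringChar F ≠ 2) (h4 : Fintype.card F % 4 = 1) :
    {b : F | {x | quadTwistSum x = b}.ncard = 0} = {b | η (b ^ 2 - 1) = -1} := by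
  have hq5 : 5 ≤ Fintype.card F := by
    have := Fintype.one_lt_card (α := F)
    omega
  ext b
  change _ = 0 ↔ η (b ^ 2 - 1) = -1
  rw [ncard_quadTwistSum_eq_ite hF h4]
  split_ifs with hb hη
  · rw [hb, sub_self, quadraticChar_zero]
    omega
  · rw [hη]
    norm_num
  · exact iff_of_true rfl ((quadraticChar_dichotomy (sub_ne_zero.mpr hb)).resolve_left hη)

theorem setOf_ncard_quadTwistSum_eq_one (hF : ringChar F ≠ 2) (h4 : Fintype.card F % 4 = 1) :
    {b : F | {x | quadTwistSum x = b}.ncard = 1} = {b | η (b ^ 2 - 1) = 1} := by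
  have hq5 : 5 ≤ Fintype.card F := by
    have := Fintype.one_lt_card (α := F)
    omega
  ext b
  change _ = 1 ↔ η (b ^ 2 - 1) = 1
  rw [ncard_quadTwistSum_eq_ite hF h4]
  split_ifs with hb hη
  · rw [hb, sub_self, quadraticChar_zero]
    omega
  · exact iff_of_true rfl hη
  · exact iff_of_false (by simp) hη

end

theorem c_neg_one_spectrum_q1mod4
    {Fq : Type*} [Field Fq] [Fintype Fq] [DecidableEq Fq]
    (hq : ringChar Fq ≠ 2) (h4 : Fintype.card Fq % 4 = 1)
    (N : Fq → ℕ)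
    (hN : ∀ b : Fq, N b = {x : Fq | ((quadraticChar Fq (x + 1) : ℤ) : Fq) * (x + 1) +
        ((quadraticChar Fq x : ℤ) : Fq) * x = b}.ncard) :
    {b : Fq | N b = 0}.ncard = (Fintype.card Fq - 1) / 2 ∧
    {b : Fq | N b = 1}.ncard = (Fintype.card Fq - 3) / 2 ∧
    N 1 = (Fintype.card Fq + 3) / 4 ∧
    N (-1) = (Fintype.card Fq + 3) / 4 ∧
    IsGreatest (Set.range N) ((Fintype.card Fq + 3) / 4) := by
  have hN' : ∀ b, N b = {x : Fq | quadTwistSum x = b}.ncard := hN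
  have hsquares := two_mul_ncard_quadraticChar_sq_sub_one_eq hq (F := Fq) (Or.inl rfl)
  have hnonsquares := two_mul_ncard_quadraticChar_sq_sub_one_eq hq (F := Fq) (Or.inr rfl)
  have hN1 : N 1 = (Fintype.card Fq + 3) / 4 := by
    rw [hN', ncard_quadTwistSum_eq_of_sq_eq_one hq h4 (one_pow 2)]
  have hNneg1 : N (-1) = (Fintype.card Fq + 3) / 4 := by
    rw [hN', ncard_quadTwistSum_eq_of_sq_eq_one hq h4 (by norm_num)]
  refine ⟨?_, ?_, hN1, hNneg1, ⟨1, hN1⟩, ?_⟩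
  · simp only [hN']
    rw [setOf_ncard_quadTwistSum_eq_zero hq h4]
    omega
  · simp only [hN']
    rw [setOf_ncard_quadTwistSum_eq_one hq h4]
    omega
  · rintro _ ⟨b, rfl⟩
    rw [hN', ncard_quadTwistSum_eq_ite hq h4]
    split_ifs <;> omega
end

section
/- Let q = pⁿ with p an odd prime, q ≡ 1 (mod 4), and d = (q+1)/2. Then the number of quadruples (x₁,x₂,x₃,x₄) ∈ F_q⁴ satisfying x₁ − x₂ + x₃ − x₄ = 0 and x₁^d + x₂^d − x₃^d − x₄^d = 0 equals (q³ + 9q² − 5q + 3)/8. -/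
/-!
Parametrising the hyperplane `x₁ - x₂ + x₃ - x₄ = 0` by `(x + u, y + u, y, x)` turns the second
equation into `Δ_u x + Δ_u y = 0`, where `Δ_u x = (x + u)^d - x^d` is `powDiff d u x`. For `u = 0`
every pair `(x, y)` is a solution, and for `u ≠ 0` homogeneity of `Δ` reduces the count to `u = 1`.

Since `x^d = x` or `-x` according as `x` is a square or not, `Δ_1 x` is `1` when `x` and `x + 1`
are both squares, `-1` when neither is, and `±(2x + 1)` otherwise. As `-1` is a square
(`q ≡ 1 mod 4`), a case analysis shows that `Δ_1 x + Δ_1 y = 0` exactly when one of `x, y` is of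
the first kind and the other of the second. Expanding the indicators of the two kinds in the
quadratic character `χ`, the Jacobi sum `∑ χ(x) χ(x + 1) = -1` shows that they have `(q + 3)/4`
and `(q - 1)/4` elements, so the count is `q² + (q - 1) · 2 · (q + 3)/4 · (q - 1)/4`.
-/

open Finset

section PowDiff

variable {F : Type*} [Field F]

def powDiff (d : ℕ) (u x : F) : F := (x + u) ^ d - x ^ d

lemma powDiff_mul_mul (d : ℕ) (c u x : F) :
    powDiff d (c * u) (c * x) = c ^ d * powDiff d u x := by
  simp only [powDiff, ← mul_add, mul_pow, mul_sub]

variable [Fintype F] [DecidableEq F]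

lemma card_powDiff_add_eq_zero_of_ne_zero (d : ℕ) {u : F} (hu : u ≠ 0) :
    #{p : F × F | powDiff d u p.1 + powDiff d u p.2 = 0} =
      #{p : F × F | powDiff d 1 p.1 + powDiff d 1 p.2 = 0} := by
  symm
  refine card_equiv ((Equiv.mulLeft₀ u hu).prodCongr (Equiv.mulLeft₀ u hu)) fun p ↦ ?_
  have h := powDiff_mul_mul d u 1
  simp only [mul_one] at h
  simp [h, ← mul_add, hu]

lemma ncard_quadruples_eq_card_triples (d : ℕ) :
    {t : F × F × F × F | t.1 - t.2.1 + t.2.2.1 - t.2.2.2 = 0 ∧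
        t.1 ^ d + t.2.1 ^ d - t.2.2.1 ^ d - t.2.2.2 ^ d = 0}.ncard =
      #{w : F × F × F | powDiff d w.1 w.2.1 + powDiff d w.1 w.2.2 = 0} := by
  let e : F × F × F → F × F × F × F := fun w ↦ (w.2.1 + w.1, w.2.2 + w.1, w.2.2, w.2.1)
  have he : Function.Injective e := by
    rintro ⟨u, x, y⟩ ⟨u', x', y'⟩ h
    simp only [e, Prod.mk.injEq] at h
    obtain ⟨h1, -, rfl, rfl⟩ := h
    simp_all
  rw [← Set.ncard_coe_finset, ← Set.ncard_image_of_injective _ he]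
  congr 1
  ext ⟨a, b, c, x⟩
  simp only [Set.mem_image, mem_coe, mem_filter_univ, Set.mem_ofPred_eq, e, Prod.exists,
    Prod.mk.injEq]
  simp only [powDiff]
  constructor
  · rintro ⟨hlin, hpow⟩
    refine ⟨a - x, x, c, ?_, by ring, by linear_combination hlin, rfl, rfl⟩
    rw [show x + (a - x) = a by ring, show c + (a - x) = b by linear_combination hlin]
    linear_combination hpow
  · rintro ⟨u, x, y, h, rfl, rfl, rfl, rfl⟩
    exact ⟨by ring, by linear_combination h⟩

lemma ncard_quadruples_eq (d : ℕ) :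
    {t : F × F × F × F | t.1 - t.2.1 + t.2.2.1 - t.2.2.2 = 0 ∧
        t.1 ^ d + t.2.1 ^ d - t.2.2.1 ^ d - t.2.2.2 ^ d = 0}.ncard =
      Fintype.card F ^ 2 +
        (Fintype.card F - 1) * #{p : F × F | powDiff d 1 p.1 + powDiff d 1 p.2 = 0} := by
  rw [ncard_quadruples_eq_card_triples, card_filter, Fintype.sum_prod_type,
    ← add_sum_erase _ _ (mem_univ 0)]
  simp only [← card_filter]
  have h0 : ∀ x : F, powDiff d 0 x = 0 := by simp [powDiff]
  rw [sum_congr rfl fun u hu ↦ card_powDiff_add_eq_zero_of_ne_zero d (ne_of_mem_erase hu)]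
  simp [h0, sq]

end PowDiff

section OddCharacteristic

variable {F : Type*} [Field F] [Fintype F]

lemma isSquare_neg_one_of_card_mod_four (h4 : Fintype.card F % 4 = 1) : IsSquare (-1 : F) :=
  FiniteField.isSquare_neg_one_iff.mpr (by omega)

lemma isSquare_neg_iff_of_card_mod_four (h4 : Fintype.card F % 4 = 1) {x : F} :
    IsSquare (-x) ↔ IsSquare x := by
  have key {z : F} (hz : IsSquare z) : IsSquare (-z) := by
    simpa using (isSquare_neg_one_of_card_mod_four h4).mul hz
  exact ⟨fun h ↦ by simpa using key h, key⟩

variable [DecidableEq F]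

lemma quadraticChar_eq_ite {a : F} (ha : a ≠ 0) :
    quadraticChar F a = if IsSquare a then 1 else -1 := by
  split_ifs with h
  · exact (quadraticChar_one_iff_isSquare ha).mpr h
  · exact quadraticChar_neg_one_iff_not_isSquare.mpr h

lemma quadraticChar_neg_one_eq_one (h4 : Fintype.card F % 4 = 1) : quadraticChar F (-1) = 1 :=
  (quadraticChar_one_iff_isSquare (neg_ne_zero.mpr one_ne_zero)).mpr
    (isSquare_neg_one_of_card_mod_four h4)

lemma pow_card_add_one_div_two (hF : ringChar F ≠ 2) (x : F) :
    x ^ ((Fintype.card F + 1) / 2) = if IsSquare x then x else -x := by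
  have hodd := FiniteField.odd_card_of_char_ne_two hF
  rw [show (Fintype.card F + 1) / 2 = Fintype.card F / 2 + 1 by omega, pow_succ,
    ← quadraticChar_eq_pow_of_char_ne_two' hF]
  rcases eq_or_ne x 0 with rfl | hx
  · simp
  rw [quadraticChar_eq_ite hx]
  split_ifs <;> simp

lemma sum_quadraticChar_mul_quadraticChar_add_one (hF : ringChar F ≠ 2) :
    ∑ x : F, quadraticChar F x * quadraticChar F (x + 1) = -1 := by
  set χ := quadraticChar F
  have hJ : ∑ x : F, χ x * χ (1 - x) = -χ (-1) := by
    simpa only [jacobiSum, (quadraticChar_isQuadratic F).inv] using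
      jacobiSum_nontrivial_inv (quadraticChar_ne_one hF)
  have hχ : χ (-1) * χ (-1) = 1 := by
    rw [← map_mul, neg_one_mul, neg_neg, map_one]
  have hneg (x : F) : χ (-x) * χ (1 - -x) = χ (-1) * (χ x * χ (x + 1)) := by
    rw [sub_neg_eq_add, add_comm 1, neg_eq_neg_one_mul x, map_mul, mul_assoc]
  rw [← Equiv.sum_comp (Equiv.neg F)] at hJ
  simp only [Equiv.neg_apply, hneg, ← mul_sum] at hJ
  linear_combination χ (-1) * hJ - (∑ x : F, χ x * χ (x + 1) + 1) * hχ

lemma sum_one_add_mul_one_add_quadraticChar (hF : ringChar F ≠ 2) {s : ℤ} (hs : s * s = 1) :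
    ∑ x : F, (1 + s * quadraticChar F x) * (1 + s * quadraticChar F (x + 1)) =
      Fintype.card F - 1 := by
  have hshift : ∑ x : F, quadraticChar F (x + 1) = 0 := by
    rw [← quadraticChar_sum_zero hF]
    exact Equiv.sum_comp (Equiv.addRight 1) _
  have hexpand (x : F) : (1 + s * quadraticChar F x) * (1 + s * quadraticChar F (x + 1)) =
      1 + s * quadraticChar F x + s * quadraticChar F (x + 1) +
        s * s * (quadraticChar F x * quadraticChar F (x + 1)) := by ring
  simp only [hexpand, sum_add_distrib, ← mul_sum, quadraticChar_sum_zero hF, hshift,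
    sum_quadraticChar_mul_quadraticChar_add_one hF, hs, sum_const, card_univ, nsmul_eq_mul]
  ring

lemma four_mul_card_isSquare_and_isSquare_add_one (hF : ringChar F ≠ 2)
    (h4 : Fintype.card F % 4 = 1) :
    4 * #{x : F | IsSquare x ∧ IsSquare (x + 1)} = Fintype.card F + 3 := by
  -- `χ` vanishes at `0`, so the product undercounts the two points `x = 0` and `x = -1`.
  have hpoint (x : F) : 4 * (if IsSquare x ∧ IsSquare (x + 1) then 1 else 0 : ℤ) =
      (1 + 1 * quadraticChar F x) * (1 + 1 * quadraticChar F (x + 1)) +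
        2 * ((if x = 0 then 1 else 0) + if x = -1 then 1 else 0) := by
    rcases eq_or_ne x 0 with rfl | hx
    · simp [IsSquare.zero, IsSquare.one]
    rcases eq_or_ne x (-1) with rfl | hx'
    · simp [quadraticChar_neg_one_eq_one h4, isSquare_neg_one_of_card_mod_four h4]
    have hx1 : x + 1 ≠ 0 := fun h ↦ hx' (eq_neg_of_add_eq_zero_left h)
    rw [quadraticChar_eq_ite hx, quadraticChar_eq_ite hx1, if_neg hx, if_neg hx']
    split_ifs <;> simp_all
  have hsum := sum_one_add_mul_one_add_quadraticChar (F := F) hF (s := 1) (by norm_num)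
  have : (4 * #{x : F | IsSquare x ∧ IsSquare (x + 1)} : ℤ) =
      Fintype.card F - 1 + 2 * (1 + 1) := by
    rw [← sum_boole, mul_sum, sum_congr rfl fun x _ ↦ hpoint x, sum_add_distrib, ← mul_sum,
      sum_add_distrib, sum_ite_eq', sum_ite_eq', hsum, if_pos (mem_univ _), if_pos (mem_univ _)]
  have hq : 1 ≤ Fintype.card F := Fintype.card_pos
  omega

lemma four_mul_card_not_isSquare_and_not_isSquare_add_one (hF : ringChar F ≠ 2)
    (h4 : Fintype.card F % 4 = 1) :
    4 * #{x : F | ¬IsSquare x ∧ ¬IsSquare (x + 1)} + 1 = Fintype.card F := by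
  have hpoint (x : F) : 4 * (if ¬IsSquare x ∧ ¬IsSquare (x + 1) then 1 else 0 : ℤ) =
      (1 + -1 * quadraticChar F x) * (1 + -1 * quadraticChar F (x + 1)) := by
    rcases eq_or_ne x 0 with rfl | hx
    · simp [IsSquare.zero, IsSquare.one]
    rcases eq_or_ne x (-1) with rfl | hx'
    · simp [quadraticChar_neg_one_eq_one h4, isSquare_neg_one_of_card_mod_four h4]
    have hx1 : x + 1 ≠ 0 := fun h ↦ hx' (eq_neg_of_add_eq_zero_left h)
    rw [quadraticChar_eq_ite hx, quadraticChar_eq_ite hx1]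
    split_ifs <;> simp_all
  have hsum := sum_one_add_mul_one_add_quadraticChar (F := F) hF (s := -1) (by norm_num)
  have : (4 * #{x : F | ¬IsSquare x ∧ ¬IsSquare (x + 1)} : ℤ) = Fintype.card F - 1 := by
    rw [← sum_boole, mul_sum, sum_congr rfl fun x _ ↦ hpoint x, hsum]
  have hq : 1 ≤ Fintype.card F := Fintype.card_pos
  omega

lemma powDiff_card_add_one_div_two (hF : ringChar F ≠ 2) (x : F) :
    powDiff ((Fintype.card F + 1) / 2) 1 x =
      (if IsSquare (x + 1) then x + 1 else -(x + 1)) - if IsSquare x then x else -x := by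
  simp only [powDiff, pow_card_add_one_div_two hF]

lemma powDiff_card_add_one_div_two_eq_one_iff (hF : ringChar F ≠ 2) {x : F} :
    powDiff ((Fintype.card F + 1) / 2) 1 x = 1 ↔ IsSquare x ∧ IsSquare (x + 1) := by
  have h2 : (2 : F) ≠ 0 := Ring.two_ne_zero hF
  refine ⟨fun h ↦ ?_, fun ⟨hx, hx1⟩ ↦ by simp [powDiff_card_add_one_div_two hF, hx, hx1]⟩
  rw [powDiff_card_add_one_div_two hF] at h
  split_ifs at h with hx1 hx
  · exact ⟨hx, hx1⟩
  · obtain rfl : x = 0 := mul_left_cancel₀ h2 (by linear_combination h)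
    exact absurd IsSquare.zero hx
  · obtain rfl : x = -1 := mul_left_cancel₀ h2 (by linear_combination -h)
    exact absurd (by simp) hx1
  · exact absurd (by linear_combination -h) h2

lemma powDiff_card_add_one_div_two_eq_neg_one_iff (hF : ringChar F ≠ 2)
    (h4 : Fintype.card F % 4 = 1) {x : F} :
    powDiff ((Fintype.card F + 1) / 2) 1 x = -1 ↔ ¬IsSquare x ∧ ¬IsSquare (x + 1) := by
  have h2 : (2 : F) ≠ 0 := Ring.two_ne_zero hF
  refine ⟨fun h ↦ ?_, fun ⟨hx, hx1⟩ ↦ by simp [powDiff_card_add_one_div_two hF, hx, hx1]⟩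
  rw [powDiff_card_add_one_div_two hF] at h
  split_ifs at h with hx1 hx hx
  · exact absurd (by linear_combination h) h2
  · obtain rfl : x = -1 := mul_left_cancel₀ h2 (by linear_combination h)
    exact absurd (isSquare_neg_one_of_card_mod_four h4) hx
  · obtain rfl : x = 0 := mul_left_cancel₀ h2 (by linear_combination -h)
    exact absurd (by simp) hx1
  · exact ⟨hx, hx1⟩

lemma powDiff_card_add_one_div_two_add_ne_zero_of_xor (hF : ringChar F ≠ 2)
    (h4 : Fintype.card F % 4 = 1) {x y : F} (hx : Xor (IsSquare x) (IsSquare (x + 1)))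
    (hy : Xor (IsSquare y) (IsSquare (y + 1))) :
    powDiff ((Fintype.card F + 1) / 2) 1 x + powDiff ((Fintype.card F + 1) / 2) 1 y ≠ 0 := by
  have h2 : (2 : F) ≠ 0 := Ring.two_ne_zero hF
  rw [powDiff_card_add_one_div_two hF, powDiff_card_add_one_div_two hF]
  rcases hx with ⟨hx, hx1⟩ | ⟨hx1, hx⟩ <;> rcases hy with ⟨hy, hy1⟩ | ⟨hy1, hy⟩ <;>
    simp only [hx, hx1, hy, hy1, if_true, if_false] <;> intro h
  · obtain hyx : y + 1 = -x := mul_left_cancel₀ h2 (by linear_combination -h)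
    exact hy1 (hyx ▸ (isSquare_neg_iff_of_card_mod_four h4).mpr hx)
  · obtain rfl : y = x := mul_left_cancel₀ h2 (by linear_combination h)
    exact hy hx
  · obtain rfl : y = x := mul_left_cancel₀ h2 (by linear_combination -h)
    exact hx hy
  · obtain rfl : y = -(x + 1) := mul_left_cancel₀ h2 (by linear_combination h)
    exact hy ((isSquare_neg_iff_of_card_mod_four h4).mpr hx1)

lemma powDiff_card_add_one_div_two_add_eq_zero_iff (hF : ringChar F ≠ 2)
    (h4 : Fintype.card F % 4 = 1) {x y : F} :
    powDiff ((Fintype.card F + 1) / 2) 1 x + powDiff ((Fintype.card F + 1) / 2) 1 y = 0 ↔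
      (IsSquare x ∧ IsSquare (x + 1)) ∧ (¬IsSquare y ∧ ¬IsSquare (y + 1)) ∨
        (¬IsSquare x ∧ ¬IsSquare (x + 1)) ∧ (IsSquare y ∧ IsSquare (y + 1)) := by
  set s := powDiff ((Fintype.card F + 1) / 2) (1 : F)
  have hxor {z : F} (h1 : s z ≠ 1) (h2 : s z ≠ -1) : Xor (IsSquare z) (IsSquare (z + 1)) := by
    rw [Ne, powDiff_card_add_one_div_two_eq_one_iff hF] at h1
    rw [Ne, powDiff_card_add_one_div_two_eq_neg_one_iff hF h4] at h2
    unfold Xor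
    tauto
  rw [← powDiff_card_add_one_div_two_eq_one_iff hF,
    ← powDiff_card_add_one_div_two_eq_neg_one_iff hF h4,
    ← powDiff_card_add_one_div_two_eq_one_iff hF,
    ← powDiff_card_add_one_div_two_eq_neg_one_iff hF h4]
  refine ⟨fun h ↦ ?_, by rintro (⟨hx, hy⟩ | ⟨hx, hy⟩) <;> linear_combination hx + hy⟩
  by_cases hx1 : s x = 1
  · exact .inl ⟨hx1, by linear_combination h - hx1⟩
  by_cases hx2 : s x = -1
  · exact .inr ⟨hx2, by linear_combination h - hx2⟩
  by_cases hy1 : s y = 1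
  · exact absurd (by linear_combination h - hy1) hx2
  by_cases hy2 : s y = -1
  · exact absurd (by linear_combination h - hy2) hx1
  exact absurd h
    (powDiff_card_add_one_div_two_add_ne_zero_of_xor hF h4 (hxor hx1 hx2) (hxor hy1 hy2))

lemma card_powDiff_card_add_one_div_two_add_eq_zero (hF : ringChar F ≠ 2)
    (h4 : Fintype.card F % 4 = 1) :
    #{p : F × F | powDiff ((Fintype.card F + 1) / 2) 1 p.1 +
        powDiff ((Fintype.card F + 1) / 2) 1 p.2 = 0} =
      2 * #{x : F | IsSquare x ∧ IsSquare (x + 1)} *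
        #{x : F | ¬IsSquare x ∧ ¬IsSquare (x + 1)} := by
  set S : Finset F := {x | IsSquare x ∧ IsSquare (x + 1)}
  set N : Finset F := {x | ¬IsSquare x ∧ ¬IsSquare (x + 1)}
  have hdisj : Disjoint (S ×ˢ N) (N ×ˢ S) := by
    rw [disjoint_left]
    rintro p hS hN
    simp only [S, N, mem_product, mem_filter, mem_univ, true_and] at hS hN
    exact hN.1.1 hS.1.1
  have hsplit : ({p : F × F | powDiff ((Fintype.card F + 1) / 2) 1 p.1 +
      powDiff ((Fintype.card F + 1) / 2) 1 p.2 = 0} : Finset (F × F)) = S ×ˢ N ∪ N ×ˢ S := by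
    ext p
    simp [S, N, powDiff_card_add_one_div_two_add_eq_zero_iff hF h4]
  rw [hsplit, card_union_of_disjoint hdisj, card_product, card_product]
  ring

end OddCharacteristic

lemma sq_add_pred_mul_eq_of_four_mul {q a b : ℕ} (ha : 4 * a = q + 3) (hb : 4 * b + 1 = q) :
    q ^ 2 + (q - 1) * (2 * a * b) = (q ^ 3 + 9 * q ^ 2 - 5 * q + 3) / 8 := by
  obtain rfl : a = b + 1 := by omega
  subst hb
  have hle : 5 * (4 * b + 1) ≤ (4 * b + 1) ^ 3 + 9 * (4 * b + 1) ^ 2 := by nlinarith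
  refine (Nat.div_eq_of_eq_mul_left (by norm_num) ?_).symm
  zify [hle, show 1 ≤ 4 * b + 1 by omega]
  ring

theorem quadruple_count_q1mod4_general
    {Fq : Type*} [Field Fq] [Fintype Fq]
    (hq : ringChar Fq ≠ 2) (h4 : Fintype.card Fq % 4 = 1) :
    {t : Fq × Fq × Fq × Fq |
        t.1 - t.2.1 + t.2.2.1 - t.2.2.2 = 0 ∧
        t.1 ^ ((Fintype.card Fq + 1) / 2) + t.2.1 ^ ((Fintype.card Fq + 1) / 2) -
          t.2.2.1 ^ ((Fintype.card Fq + 1) / 2) -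
          t.2.2.2 ^ ((Fintype.card Fq + 1) / 2) = 0}.ncard =
      (Fintype.card Fq ^ 3 + 9 * Fintype.card Fq ^ 2 - 5 * Fintype.card Fq + 3) / 8 := by
  classical
  rw [ncard_quadruples_eq, card_powDiff_card_add_one_div_two_add_eq_zero hq h4]
  exact sq_add_pred_mul_eq_of_four_mul (four_mul_card_isSquare_and_isSquare_add_one hq h4)
    (four_mul_card_not_isSquare_and_not_isSquare_add_one hq h4)

theorem quadruple_count_q1mod4
    {Fq : Type*} [Field Fq] [Fintype Fq] [DecidableEq Fq]
    (hq : ringChar Fq ≠ 2) (h4 : Fintype.card Fq % 4 = 1) :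
    {t : Fq × Fq × Fq × Fq |
        t.1 - t.2.1 + t.2.2.1 - t.2.2.2 = 0 ∧
        t.1 ^ ((Fintype.card Fq + 1) / 2) + t.2.1 ^ ((Fintype.card Fq + 1) / 2) -
          t.2.2.1 ^ ((Fintype.card Fq + 1) / 2) -
          t.2.2.2 ^ ((Fintype.card Fq + 1) / 2) = 0}.ncard =
      (Fintype.card Fq ^ 3 + 9 * Fintype.card Fq ^ 2 - 5 * Fintype.card Fq + 3) / 8 :=
  quadruple_count_q1mod4_general hq h4
end

section
/- Let q be an odd prime power, η the quadratic character of F_q, and c ∈ F_q with c ≠ 0, 1, −1. Then ∑_{b∈F_q} η((b²−1)(b²−c²)) = ∑_{a∈F_q} η(a(a−1)(a−c²)) − 1. -/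
/-!
Substituting `a = b ^ 2` counts each `a` with multiplicity `η a + 1`, so the quartic sum equals
`∑ η(a (a - 1) (a - c²)) + ∑ η((a - 1)(a - c²))`, and the second sum of a quadratic with distinct
roots `1 ≠ c²` is `-1`.
-/

open Finset

section

variable {F : Type*} [Field F] [Fintype F] [DecidableEq F]

theorem sum_comp_sq_eq_sum_quadraticChar_add_one_smul {M : Type*} [AddCommGroup M]
    (hF : ringChar F ≠ 2) (f : F → M) :
    ∑ b : F, f (b ^ 2) = ∑ a : F, (quadraticChar F a + 1) • f a := by
  rw [← Finset.sum_fiberwise univ (· ^ 2)]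
  refine sum_congr rfl fun a _ => ?_
  rw [sum_congr rfl fun b hb => congrArg f (mem_filter.mp hb).2, sum_const,
    ← quadraticChar_card_sqrts hF a, Set.toFinset_ofPred, natCast_zsmul]

theorem quadraticChar_sum_sub_mul_sub (hF : ringChar F ≠ 2) {u v : F} (huv : u ≠ v) :
    ∑ a : F, quadraticChar F ((a - u) * (a - v)) = -1 := by
  have hk : u - v ≠ 0 := sub_ne_zero.mpr huv
  -- `a ↦ 1 + (u - v) / (a - u)` is a bijection of `F` once `0⁻¹ = 0`; away from `a = u` it
  -- differs from `(a - u) * (a - v)` by the square factor `(a - u) ^ 2`, and at `a = u` it gives `1`.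
  let e : F ≃ F :=
    ((Equiv.subRight u).trans (Equiv.inv F)).trans ((Equiv.mulLeft₀ _ hk).trans (Equiv.addLeft 1))
  have hterm : ∀ a, quadraticChar F ((a - u) * (a - v)) =
      quadraticChar F (e a) - if a = u then 1 else 0 := by
    intro a
    by_cases ha : a = u
    · simp [e, ha]
    · have hau : a - u ≠ 0 := sub_ne_zero.mpr ha
      have : (a - u) * (a - v) = (a - u) ^ 2 * (1 + (u - v) * (a - u)⁻¹) := by
        field_simp; ring
      rw [this, map_mul, quadraticChar_sq_one' hau, one_mul]
      simp [e, ha]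
  rw [sum_congr rfl fun a _ => hterm a, sum_sub_distrib, sum_ite_eq',
    Equiv.sum_comp e (quadraticChar F ·), quadraticChar_sum_zero hF]
  simp

end

theorem quartic_sum_eq_cubic_sum_sub_one_general
    {Fq : Type*} [Field Fq] [Fintype Fq] [DecidableEq Fq]
    (hq : ringChar Fq ≠ 2) (c : Fq) (hc1 : c ≠ 1) (hcm1 : c ≠ -1) :
    ∑ b : Fq, quadraticChar Fq ((b ^ 2 - 1) * (b ^ 2 - c ^ 2)) =
      (∑ a : Fq, quadraticChar Fq (a * (a - 1) * (a - c ^ 2))) - 1 := by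
  have hc2 : (1 : Fq) ≠ c ^ 2 := fun h => (sq_eq_one_iff.mp h.symm).elim hc1 hcm1
  rw [sum_comp_sq_eq_sum_quadraticChar_add_one_smul hq
    (fun a => quadraticChar Fq ((a - 1) * (a - c ^ 2)))]
  simp only [smul_eq_mul, add_one_mul, ← map_mul, ← mul_assoc, sum_add_distrib]
  rw [quadraticChar_sum_sub_mul_sub hq hc2, sub_eq_add_neg]

theorem quartic_sum_eq_cubic_sum_sub_one
    {Fq : Type*} [Field Fq] [Fintype Fq] [DecidableEq Fq]
    (hq : ringChar Fq ≠ 2) (c : Fq) (hc0 : c ≠ 0) (hc1 : c ≠ 1) (hcm1 : c ≠ -1) :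
    ∑ b : Fq, quadraticChar Fq ((b ^ 2 - 1) * (b ^ 2 - c ^ 2)) =
      (∑ a : Fq, quadraticChar Fq (a * (a - 1) * (a - c ^ 2))) - 1 :=
  quartic_sum_eq_cubic_sum_sub_one_general hq c hc1 hcm1
end
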